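/- Fix natural numbers k ≥ 1, n ≥ k, and a real number ε with 0 ≤ ε < 1. Then ∑_{r=k}^{n} ∑_{e=0}^{∞} min(r+e, n) · C(r+e−1, e) ε^e (1−ε)^r · P_{M_n}(r) ≤ (1/(1−ε)) · ∑_{r=k}^{n} r · P_{M_n}(r), where P_{M_n}(r) = 2^{k−r} ∏_{l=0}^{n−r−1} (1 − 2^{l−(n−k)}). That is, E[N_n] ≤ E[M_n]/(1−ε). -/

import Mathlib

/-!
Bounding `min (r + e) n ≤ r + e` turns each inner series into the mean `r / (1 - ε)` of
`r + E_r`, since `(r + e) * C(r + e - 1, e) = r * C(r + e, r)` and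
`∑ₑ C(e + r, r) εᵉ = (1 - ε)^{-(r+1)}`; the weights `P_{M_n}(r)` are nonnegative for `r ≥ k`.
-/

/-- `P_{M_n}(r) = 2^{k−r} ∏_{l=0}^{n−r−1} (1 − 2^{l−(n−k)})`. -/
noncomputable def PM (k n r : ℕ) : ℝ :=
  (2 : ℝ) ^ ((k : ℤ) - (r : ℤ)) *
    ∏ l ∈ Finset.range (n - r), (1 - (2 : ℝ) ^ ((l : ℤ) - ((n : ℤ) - (k : ℤ))))

lemma PM_nonneg {k n r : ℕ} (hkr : k ≤ r) : 0 ≤ PM k n r := by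
  refine mul_nonneg (by positivity) (Finset.prod_nonneg fun l hl => ?_)
  have hl : (l : ℤ) - ((n : ℤ) - (k : ℤ)) ≤ 0 := by
    rw [Finset.mem_range] at hl
    omega
  linarith [zpow_le_one_of_nonpos₀ (by norm_num : (1 : ℝ) ≤ 2) hl]

lemma add_mul_choose_sub_one (r e : ℕ) :
    (r + e) * (r + e - 1).choose e = r * (r + e).choose r := by
  rcases Nat.eq_zero_or_pos r with rfl | hr
  · rcases e with _ | e <;> simp
  · obtain ⟨s, rfl⟩ := Nat.exists_eq_add_of_lt hr
    have h := Nat.choose_mul_succ_eq (s + e) e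
    rw [show s + e + 1 - e = s + 1 by omega] at h
    rw [show 0 + s + 1 + e - 1 = s + e by omega, show 0 + s + 1 + e = s + e + 1 by omega,
      zero_add, Nat.choose_symm_of_eq_add (by omega : s + e + 1 = (s + 1) + e)]
    linarith

lemma hasSum_negBinomial_mean {𝕜 : Type*} [NormedField 𝕜] [CompleteSpace 𝕜] {ε : 𝕜}
    (hε : ‖ε‖ < 1) (r : ℕ) :
    HasSum (fun e : ℕ => ((r + e : ℕ) : 𝕜) * (r + e - 1).choose e * ε ^ e * (1 - ε) ^ r)
      (r / (1 - ε)) := by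
  have hε1 : 1 - ε ≠ 0 := by
    rw [sub_ne_zero]
    rintro rfl
    simp at hε
  have h := (hasSum_choose_mul_geometric_of_norm_lt_one r hε).mul_left (r * (1 - ε) ^ r)
  rw [show (r : 𝕜) * (1 - ε) ^ r * (1 / (1 - ε) ^ (r + 1)) = r / (1 - ε) by
    field_simp; ring] at h
  refine h.congr_fun fun e => ?_
  rw [mul_assoc (_ : 𝕜), ← Nat.cast_mul, add_mul_choose_sub_one, add_comm e]
  push_cast
  ring

lemma tsum_min_mul_negBinomial_le {ε : ℝ} (h₀ : 0 ≤ ε) (h₁ : ε < 1) (r n : ℕ) :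
    ∑' e : ℕ, (min (r + e) n : ℝ) * (r + e - 1).choose e * ε ^ e * (1 - ε) ^ r
      ≤ r / (1 - ε) := by
  have hmean := hasSum_negBinomial_mean (by rwa [Real.norm_of_nonneg h₀]) r (ε := ε)
  have hle : ∀ e : ℕ, (min (r + e) n : ℝ) * (r + e - 1).choose e * ε ^ e * (1 - ε) ^ r
      ≤ ((r + e : ℕ) : ℝ) * (r + e - 1).choose e * ε ^ e * (1 - ε) ^ r := fun e => by
    gcongr
    exact_mod_cast min_le_left _ _
  have hnonneg : ∀ e : ℕ,
      0 ≤ (min (r + e) n : ℝ) * (r + e - 1).choose e * ε ^ e * (1 - ε) ^ r := fun e => by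
    positivity
  exact hasSum_le hle (hmean.summable.of_nonneg_of_le hnonneg hle).hasSum hmean

theorem mean_round_length_le_general (k n : ℕ) (ε : ℝ)
    (h₀ : 0 ≤ ε) (h₁ : ε < 1) :
    (∑ r ∈ Finset.Icc k n, ∑' e : ℕ,
        (min (r + e) n : ℝ) * (Nat.choose (r + e - 1) e : ℝ) * ε ^ e * (1 - ε) ^ r *
          PM k n r)
      ≤ (1 / (1 - ε)) * ∑ r ∈ Finset.Icc k n, (r : ℝ) * PM k n r := by
  rw [Finset.mul_sum]
  refine Finset.sum_le_sum fun r hr => ?_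
  rw [tsum_mul_right, one_div_mul_eq_div, ← div_mul_eq_mul_div]
  exact mul_le_mul_of_nonneg_right (tsum_min_mul_negBinomial_le h₀ h₁ r n)
    (PM_nonneg (Finset.mem_Icc.mp hr).1)

/-- `E[N_n] ≤ E[M_n]/(1−ε)`: the expected length of an incremental-redundancy round
over a memoryless erasure channel with erasure probability `ε` is at most the expected
number of unerased symbols needed to decode, divided by `1 − ε`. -/
theorem mean_round_length_le (k n : ℕ) (hk : 1 ≤ k) (hn : k ≤ n) (ε : ℝ)
    (h₀ : 0 ≤ ε) (h₁ : ε < 1) :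
    (∑ r ∈ Finset.Icc k n, ∑' e : ℕ,
        (min (r + e) n : ℝ) * (Nat.choose (r + e - 1) e : ℝ) * ε ^ e * (1 - ε) ^ r *
          PM k n r)
      ≤ (1 / (1 - ε)) * ∑ r ∈ Finset.Icc k n, (r : ℝ) * PM k n r :=
  mean_round_length_le_general k n ε h₀ h₁
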